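/- Let M be a finite nonempty set, θ a completely alternating function on subsets of M with θ(∅)=0 and θ({t})=1, and τ^M_L := Σ_{I⊆L}(−1)^{|I|+1} θ((M∖L)∪I) ≥ 0 the TM coefficients. Let ℓ*(x) := Σ_{∅≠L⊆M} τ^M_L ⋁_{t∈L} x_t for x ∈ [0,∞)^M. Then for every x ∈ [0,∞)^M and every y ∈ [0,∞)^M satisfying ⟨y, 𝟙_A⟩ ≤ θ(A) for all nonempty A ⊆ M, one has ⟨x,y⟩ ≤ ℓ*(x). Consequently the dependency set of the TM vector equals {y ∈ [0,∞)^M : Σ_{t∈A} y_t ≤ θ(A) for all ∅ ≠ A ⊆ M}. -/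

import Mathlib

/-!
The TM coefficients are the Möbius inversion of `A ↦ -θ(Aᶜ)` on the Boolean lattice, so they
add up to `θ A` over the sets `L` meeting `A`. Consequently `ℓ*` is additive along the
decomposition `x = x' + c 𝟙_S` obtained by subtracting the minimum `c` of `x` on its support `S`:
`ℓ*(x' + c 𝟙_S) = ℓ*(x') + c θ(S)`, while `⟨x' + c 𝟙_S, y⟩ = ⟨x', y⟩ + c ∑_{t ∈ S} y_t`.
Induction on the support gives `⟨x, y⟩ ≤ ℓ*(x)` whenever `∑_{t ∈ A} y_t ≤ θ(A)` for all `A`;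
conversely `ℓ*(𝟙_A) = θ(A)`, which identifies the dependency set.
-/

open Finset

/-- `ψ` is completely alternating on `(Finset M, ∪, ∅)`. -/
def CompAlt {M : Type*} [DecidableEq M] (ψ : Finset M → ℝ) : Prop :=
  ∀ n : ℕ, 1 ≤ n → ∀ (K : Finset M) (Ks : Fin n → Finset M),
    ∑ I ∈ (Finset.univ : Finset (Fin n)).powerset,
      (-1 : ℝ) ^ I.card * ψ (K ∪ I.sup Ks) ≤ 0

section Moebius

variable {α R : Type*} [DecidableEq α] [CommRing R]

theorem sum_Icc_neg_one_pow_card_sdiff {K C : Finset α} (hKC : K ⊆ C) :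
    ∑ L ∈ Icc K C, (-1 : R) ^ #(L \ K) = if K = C then 1 else 0 := by
  have hdisj {D : Finset α} (hD : D ∈ (C \ K).powerset) : Disjoint K D :=
    disjoint_of_subset_right (mem_powerset.1 hD) disjoint_sdiff
  rw [Icc_eq_image_powerset hKC, sum_image fun D hD E hE h => by
    rw [← union_sdiff_cancel_left (hdisj hD), h, union_sdiff_cancel_left (hdisj hE)]]
  have hKC' : K = C ↔ C ⊆ K := ⟨fun h => h ▸ subset_rfl, hKC.antisymm⟩
  have h := congrArg (Int.cast : ℤ → R) (sum_powerset_neg_one_pow_card (x := C \ K))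
  push_cast at h
  simp only [sdiff_eq_empty_iff_subset, ← hKC'] at h
  rw [← h]
  exact sum_congr rfl fun D hD => by rw [union_sdiff_cancel_left (hdisj hD)]

theorem sum_powerset_sum_powerset_neg_one_pow_card_sdiff (g : Finset α → R) (C : Finset α) :
    ∑ L ∈ C.powerset, ∑ K ∈ L.powerset, (-1) ^ #(L \ K) * g K = g C := by
  calc _ = ∑ K ∈ C.powerset, ∑ L ∈ Icc K C, (-1) ^ #(L \ K) * g K :=
        sum_comm' fun L K => by
          simp only [mem_powerset, mem_Icc]
          exact ⟨fun h => ⟨⟨h.2, h.1⟩, h.2.trans h.1⟩, fun h => ⟨h.1.2, h.1.1⟩⟩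
    _ = ∑ K ∈ C.powerset, if K = C then g K else 0 := sum_congr rfl fun K hK => by
        rw [← sum_mul, sum_Icc_neg_one_pow_card_sdiff (mem_powerset.1 hK), ite_mul, one_mul,
          zero_mul]
    _ = g C := by simp

end Moebius

section BiSup

variable {ι : Type*}

theorem le_biSup_of_mem [Finite ι] (x : ι → ℝ) {L : Finset ι} {t : ι} (ht : t ∈ L) :
    x t ≤ ⨆ s ∈ L, x s :=
  le_ciSup_of_le (Finite.bddAbove_range _) t (by rw [ciSup_pos ht])

theorem biSup_nonneg {x : ι → ℝ} (hx : 0 ≤ x) (L : Finset ι) : 0 ≤ ⨆ t ∈ L, x t :=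
  Real.iSup_nonneg fun t => Real.iSup_nonneg fun _ => hx t

theorem biSup_le_of_nonneg {x : ι → ℝ} {L : Finset ι} {a : ℝ} (ha : 0 ≤ a)
    (h : ∀ t ∈ L, x t ≤ a) : ⨆ t ∈ L, x t ≤ a :=
  Real.iSup_le (fun t => Real.iSup_le (h t) ha) ha

theorem biSup_add_indicator_of_inter_nonempty [Finite ι] [DecidableEq ι] {x : ι → ℝ}
    {S L : Finset ι} {c : ℝ} (hx : 0 ≤ x) (hxS : ∀ t ∉ S, x t = 0) (hc : 0 ≤ c)
    (hLS : (L ∩ S).Nonempty) :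
    ⨆ t ∈ L, (x t + (S : Set ι).indicator (fun _ => c) t) = (⨆ t ∈ L, x t) + c := by
  refine le_antisymm (biSup_le_of_nonneg (add_nonneg (biSup_nonneg hx L) hc) fun t ht => ?_) ?_
  · have : (S : Set ι).indicator (fun _ => c) t ≤ c := Set.indicator_le_self' (fun _ _ => hc) t
    linarith [le_biSup_of_mem x ht]
  · obtain ⟨s, hsL⟩ := hLS
    rw [mem_inter] at hsL
    obtain ⟨t, ht, htmax⟩ := exists_max_image L x ⟨s, hsL.1⟩
    have hsup : ⨆ t ∈ L, x t ≤ x t := biSup_le_of_nonneg (hx t) htmax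
    by_cases htS : t ∈ S
    · have := le_biSup_of_mem (fun t => x t + (S : Set ι).indicator (fun _ => c) t) ht
      simp only [Set.indicator_of_mem (mem_coe.2 htS)] at this
      linarith
    · -- the maximum of `x` on `L` is then `0`, and any point of `L ∩ S` gains `c`
      have := le_biSup_of_mem (fun t => x t + (S : Set ι).indicator (fun _ => c) t) hsL.1
      simp only [Set.indicator_of_mem (mem_coe.2 hsL.2)] at this
      linarith [hxS t htS, show 0 ≤ x s from hx s]

theorem biSup_add_indicator_of_inter_eq_empty [DecidableEq ι] {x : ι → ℝ} {S L : Finset ι}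
    {c : ℝ} (hLS : L ∩ S = ∅) :
    ⨆ t ∈ L, (x t + (S : Set ι).indicator (fun _ => c) t) = ⨆ t ∈ L, x t := by
  refine iSup_congr fun t => iSup_congr fun ht => ?_
  have : t ∉ S := fun htS => nonempty_iff_ne_empty.1 ⟨t, mem_inter.2 ⟨ht, htS⟩⟩ hLS
  simp [this]

theorem exists_eq_add_indicator [DecidableEq ι] {x : ι → ℝ} {S : Finset ι} (hS : S.Nonempty)
    (hx : 0 ≤ x) (hxS : ∀ t ∉ S, x t = 0) :
    ∃ t₀ ∈ S, ∃ c ≥ 0, ∃ x' ≥ 0, (∀ t ∉ S.erase t₀, x' t = 0) ∧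
      x = x' + (S : Set ι).indicator fun _ => c := by
  obtain ⟨t₀, ht₀, hmin⟩ := exists_min_image S x hS
  refine ⟨t₀, ht₀, x t₀, hx t₀, x - (S : Set ι).indicator fun _ => x t₀, fun t => ?_,
    fun t ht => ?_, (sub_add_cancel _ _).symm⟩
  · by_cases htS : t ∈ S
    · simp [htS, hmin t htS]
    · simpa [htS] using hx t
  · by_cases htS : t ∈ S
    · obtain rfl : t = t₀ := by simpa [htS] using ht
      simp [htS]
    · simp [htS, hxS t htS]

end BiSup

section TM

variable {M : Type*} [Fintype M]

def tmCoeff [DecidableEq M] (θ : Finset M → ℝ) (L : Finset M) : ℝ :=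
  ∑ I ∈ L.powerset, (-1 : ℝ) ^ (#I + 1) * θ ((univ \ L) ∪ I)

theorem tmCoeff_eq_neg_sum_powerset [DecidableEq M] (θ : Finset M → ℝ) (L : Finset M) :
    tmCoeff θ L = -∑ K ∈ L.powerset, (-1) ^ #(L \ K) * θ (univ \ K) := by
  rw [tmCoeff, ← sum_neg_distrib]
  refine sum_nbij' (L \ ·) (L \ ·) (fun _ _ => by simp) (fun _ _ => by simp)
    (fun I hI => Finset.sdiff_sdiff_eq_self (mem_powerset.1 hI))
    (fun K hK => Finset.sdiff_sdiff_eq_self (mem_powerset.1 hK)) fun I hI => ?_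
  rw [Finset.sdiff_sdiff_eq_self (mem_powerset.1 hI), pow_succ, sdiff_sdiff_right',
    inf_eq_inter, univ_inter, sup_eq_union]
  ring

theorem sum_powerset_tmCoeff [DecidableEq M] (θ : Finset M → ℝ) (C : Finset M) :
    ∑ L ∈ C.powerset, tmCoeff θ L = -θ (univ \ C) := by
  simp only [tmCoeff_eq_neg_sum_powerset, sum_neg_distrib,
    sum_powerset_sum_powerset_neg_one_pow_card_sdiff]

theorem sum_tmCoeff_inter_nonempty [DecidableEq M] (θ : Finset M → ℝ) (A : Finset M) :
    ∑ L with (L ∩ A).Nonempty, tmCoeff θ L = θ A - θ ∅ := by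
  have hdisj : ∑ L with ¬(L ∩ A).Nonempty, tmCoeff θ L = -θ A := by
    have : ({L | ¬(L ∩ A).Nonempty} : Finset (Finset M)) = (univ \ A).powerset := by
      ext L
      simp [subset_sdiff, not_nonempty_iff_eq_empty, disjoint_iff_inter_eq_empty]
    rw [this, sum_powerset_tmCoeff, sdiff_sdiff_right_self, inf_eq_inter, univ_inter]
  have hall : ∑ L, tmCoeff θ L = -θ ∅ := by simpa using sum_powerset_tmCoeff θ univ
  rw [← sum_filter_add_sum_filter_not univ (fun L => (L ∩ A).Nonempty), hdisj] at hall
  linarith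

/-- The paper's `ℓ*` for coefficients `τ`, summed over all `L` (the term `L = ∅` is `0`). -/
noncomputable def stdf (τ : Finset M → ℝ) (x : M → ℝ) : ℝ :=
  ∑ L, τ L * ⨆ t ∈ L, x t

theorem stdf_eq_sum_nonempty (τ : Finset M → ℝ) (x : M → ℝ) :
    stdf τ x = ∑ L ∈ (univ : Finset M).powerset.filter Finset.Nonempty, τ L * ⨆ t ∈ L, x t := by
  rw [powerset_univ, stdf]
  exact (sum_filter_of_ne fun L _ h => nonempty_iff_ne_empty.2 (by rintro rfl; simp at h)).symm

theorem stdf_zero (τ : Finset M → ℝ) : stdf τ 0 = 0 := by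
  simp [stdf]

theorem stdf_add_indicator [DecidableEq M] (τ : Finset M → ℝ) {x : M → ℝ} {S : Finset M}
    {c : ℝ} (hx : 0 ≤ x) (hxS : ∀ t ∉ S, x t = 0) (hc : 0 ≤ c) :
    stdf τ (x + (S : Set M).indicator fun _ => c) =
      stdf τ x + c * ∑ L with (L ∩ S).Nonempty, τ L := by
  simp only [stdf, Pi.add_apply, mul_sum, sum_filter, ← sum_add_distrib]
  refine sum_congr rfl fun L _ => ?_
  by_cases hLS : (L ∩ S).Nonempty
  · rw [biSup_add_indicator_of_inter_nonempty hx hxS hc hLS, if_pos hLS]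
    ring
  · rw [biSup_add_indicator_of_inter_eq_empty (not_nonempty_iff_eq_empty.1 hLS), if_neg hLS, mul_zero, add_zero]

theorem stdf_indicator [DecidableEq M] (τ : Finset M → ℝ) (A : Finset M) :
    stdf τ ((A : Set M).indicator 1) = ∑ L with (L ∩ A).Nonempty, τ L := by
  have := stdf_add_indicator τ le_rfl (fun _ _ => rfl) zero_le_one (S := A)
  rwa [zero_add, stdf_zero, zero_add, one_mul] at this

theorem sum_mul_le_stdf [DecidableEq M] {τ : Finset M → ℝ} {x y : M → ℝ}
    (hy : ∀ A : Finset M, A.Nonempty → ∑ t ∈ A, y t ≤ ∑ L with (L ∩ A).Nonempty, τ L)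
    (hx : 0 ≤ x) : ∑ t, x t * y t ≤ stdf τ x := by
  suffices ∀ S : Finset M, ∀ x : M → ℝ, 0 ≤ x → (∀ t ∉ S, x t = 0) →
      ∑ t, x t * y t ≤ stdf τ x from this univ x hx (by simp)
  intro S
  induction S using Finset.strongInduction with
  | H S ih =>
    intro x hx hxS
    obtain rfl | hS := S.eq_empty_or_nonempty
    · obtain rfl : x = 0 := funext fun t => hxS t (notMem_empty t)
      simp [stdf_zero]
    obtain ⟨t₀, ht₀, c, hc, x', hx', hx'S, rfl⟩ := exists_eq_add_indicator hS hx hxS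
    have hx'S' : ∀ t ∉ S, x' t = 0 := fun t ht => hx'S t fun h => ht (mem_of_mem_erase h)
    calc ∑ t, (x' + (S : Set M).indicator fun _ => c) t * y t
        = ∑ t, x' t * y t + c * ∑ t ∈ S, y t := by
          simp [add_mul, sum_add_distrib, Set.indicator_apply, mul_sum]
      _ ≤ stdf τ x' + c * ∑ L with (L ∩ S).Nonempty, τ L :=
          add_le_add (ih _ (erase_ssubset ht₀) x' hx' hx'S)
            (mul_le_mul_of_nonneg_left (hy S hS) hc)
      _ = stdf τ (x' + (S : Set M).indicator fun _ => c) :=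
          (stdf_add_indicator τ hx' hx'S' hc).symm

end TM

theorem TM_dependency_set_general {M : Type*} [Fintype M] [DecidableEq M]
    (θ : Finset M → ℝ) (h0 : θ ∅ = 0)
    (τ : Finset M → ℝ)
    (hτ : ∀ L : Finset M, τ L =
      ∑ I ∈ L.powerset, (-1 : ℝ) ^ (I.card + 1) * θ ((Finset.univ \ L) ∪ I))
    (ℓstar : (M → ℝ) → ℝ)
    (hℓ : ∀ x : M → ℝ, ℓstar x =
      ∑ L ∈ (Finset.univ : Finset M).powerset.filter Finset.Nonempty,
        τ L * ⨆ t ∈ L, x t) :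
    (∀ x y : M → ℝ, (∀ t, 0 ≤ x t) → (∀ t, 0 ≤ y t) →
      (∀ A : Finset M, A.Nonempty → ∑ t ∈ A, y t ≤ θ A) →
      ∑ t, x t * y t ≤ ℓstar x) ∧
    ({y : M → ℝ | (∀ t, 0 ≤ y t) ∧
        ∀ x : M → ℝ, (∀ t, 0 ≤ x t) → ∑ t, x t * y t ≤ ℓstar x}
      = {y : M → ℝ | (∀ t, 0 ≤ y t) ∧
        ∀ A : Finset M, A.Nonempty → ∑ t ∈ A, y t ≤ θ A}) := by
  obtain rfl : τ = tmCoeff θ := funext hτ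
  obtain rfl : ℓstar = stdf (tmCoeff θ) :=
    funext fun x => (hℓ x).trans (stdf_eq_sum_nonempty _ x).symm
  have hcap (A : Finset M) : ∑ L with (L ∩ A).Nonempty, tmCoeff θ L = θ A := by
    rw [sum_tmCoeff_inter_nonempty, h0, sub_zero]
  have hle : ∀ x y : M → ℝ, (∀ t, 0 ≤ x t) → (∀ t, 0 ≤ y t) →
      (∀ A : Finset M, A.Nonempty → ∑ t ∈ A, y t ≤ θ A) →
      ∑ t, x t * y t ≤ stdf (tmCoeff θ) x :=
    fun x y hx _ hy => sum_mul_le_stdf (fun A hA => (hy A hA).trans (hcap A).ge) hx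
  refine ⟨hle, Set.ext fun y => ⟨fun ⟨hy, hℓy⟩ => ⟨hy, fun A _ => ?_⟩,
    fun ⟨hy, hθy⟩ => ⟨hy, fun x hx => hle x y hx hy hθy⟩⟩⟩
  calc ∑ t ∈ A, y t = ∑ t, (A : Set M).indicator 1 t * y t := by
        simp [Set.indicator_apply, sum_ite_mem]
    _ ≤ stdf (tmCoeff θ) ((A : Set M).indicator 1) :=
        hℓy _ (Set.indicator_nonneg fun _ _ => zero_le_one)
    _ = θ A := by rw [stdf_indicator, hcap]

/-- For a completely alternating `θ` with `θ(∅)=0`, `θ({t})=1`, TM coefficients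
`τ^M_L` and stable tail dependence function `ℓ*(x) = ∑_{∅≠L} τ^M_L ⋁_{t∈L} x_t`:
every `y ∈ [0,∞)^M` with `⟨y,𝟙_A⟩ ≤ θ(A)` for all nonempty `A` satisfies
`⟨x,y⟩ ≤ ℓ*(x)` for all `x ∈ [0,∞)^M`; consequently the dependency set of the
TM vector equals `{y ∈ [0,∞)^M : ∑_{t∈A} y_t ≤ θ(A) for all ∅ ≠ A ⊆ M}`. -/
theorem TM_dependency_set {M : Type*} [Fintype M] [DecidableEq M] [Nonempty M]
    (θ : Finset M → ℝ) (hCA : CompAlt θ) (h0 : θ ∅ = 0)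
    (h1 : ∀ t : M, θ {t} = 1)
    (τ : Finset M → ℝ)
    (hτ : ∀ L : Finset M, τ L =
      ∑ I ∈ L.powerset, (-1 : ℝ) ^ (I.card + 1) * θ ((Finset.univ \ L) ∪ I))
    (ℓstar : (M → ℝ) → ℝ)
    (hℓ : ∀ x : M → ℝ, ℓstar x =
      ∑ L ∈ (Finset.univ : Finset M).powerset.filter Finset.Nonempty,
        τ L * ⨆ t ∈ L, x t) :
    (∀ x y : M → ℝ, (∀ t, 0 ≤ x t) → (∀ t, 0 ≤ y t) →
      (∀ A : Finset M, A.Nonempty → ∑ t ∈ A, y t ≤ θ A) →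
      ∑ t, x t * y t ≤ ℓstar x) ∧
    ({y : M → ℝ | (∀ t, 0 ≤ y t) ∧
        ∀ x : M → ℝ, (∀ t, 0 ≤ x t) → ∑ t, x t * y t ≤ ℓstar x}
      = {y : M → ℝ | (∀ t, 0 ≤ y t) ∧
        ∀ A : Finset M, A.Nonempty → ∑ t ∈ A, y t ≤ θ A}) :=
  TM_dependency_set_general θ h0 τ hτ ℓstar hℓ
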